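/- For each c ≥ 3, the number of palindromic or anti-palindromic even-length sequences of nonzero integers with 2·Σ|a_i| − ℓ = c equals e_p(c) = (2/3)·(2^{⌊(c−1)/2⌋} − (−1)^{⌊(c−1)/2⌋}). -/

import Mathlib

open Classical

/-- The number of sign changes in a finite sequence of integers. -/
def signChanges (l : List ℤ) : ℕ :=
  ((l.zip l.tail).filter (fun p => p.1 * p.2 < 0)).length

/-- The sum of the absolute values of the entries. -/
def absSum (l : List ℤ) : ℕ := (l.map Int.natAbs).sum

/-- An even continued fraction representation: a nonempty even-length
sequence of nonzero integers. -/
def IsECF (l : List ℤ) : Prop :=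
  l ≠ [] ∧ Even l.length ∧ ∀ x ∈ l, x ≠ 0

/-- Palindromic or anti-palindromic sequences. -/
def IsPalOrAnti (l : List ℤ) : Prop :=
  l.reverse = l ∨ l.reverse = l.map (fun x => -x)

/-- The set `E(c)` of even continued fractions with crossing number `c`. -/
def Ecross (c : ℕ) : Set (List ℤ) :=
  {l | IsECF l ∧ (2 * absSum l : ℤ) - signChanges l = c}

/-- The set `E(c,b)` of even continued fractions with crossing number `c`
and braid index `b`. -/
def Eset (c b : ℕ) : Set (List ℤ) :=
  {l | IsECF l ∧ (2 * absSum l : ℤ) - signChanges l = c ∧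
    (absSum l : ℤ) - signChanges l + 1 = b}

noncomputable def e (c b : ℕ) : ℕ := (Eset c b).ncard

noncomputable def eTot (c : ℕ) : ℕ := (Ecross c).ncard

noncomputable def ep (c b : ℕ) : ℕ := (Eset c b ∩ {l | IsPalOrAnti l}).ncard

noncomputable def epTot (c : ℕ) : ℕ := (Ecross c ∩ {l | IsPalOrAnti l}).ncard

/-!
An even-length palindromic or anti-palindromic sequence is `h ++ reverse h` or
`h ++ reverse (-h)` for its first half `h`. The middle pair of entries contributes no sign change
in the first case and exactly one in the second, so the sequence has crossing number
`2 * crossing h` or `2 * crossing h - 1`, where `crossing l = 2 Σ |aᵢ| - ℓ`. Hence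
`e_p(c) = f((c + 1) / 2)`, where `f d` counts the nonempty sequences of nonzero integers, of any
length, with crossing number `d`.

Classify such a sequence by its first entry `a`: if `|a| ≥ 2`, moving `a` one step towards zero
lowers the crossing number by 2; if `a = ±1`, dropping it lowers the crossing number by 2 or by 1
according as no sign change or a sign change follows it. So `f (d + 2) = f (d + 1) + 2 f d` for
`d ≥ 1`, with `f 1 = 0` and `f 2 = 2`, whence `3 f (n + 1) = 2 (2ⁿ - (-1)ⁿ)`.
-/

def negIf (b : Bool) (x : ℤ) : ℤ := bif b then -x else x

@[simp] theorem negIf_false : negIf false = id := rfl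

@[simp] theorem negIf_true : negIf true = Neg.neg := rfl

@[simp] theorem natAbs_negIf (b : Bool) (x : ℤ) : (negIf b x).natAbs = x.natAbs := by
  cases b <;> simp

theorem negIf_mul_negIf (b : Bool) (x y : ℤ) : negIf b x * negIf b y = x * y := by
  cases b <;> simp

theorem negIf_negIf (b : Bool) (x : ℤ) : negIf b (negIf b x) = x := by
  cases b <;> simp

theorem mul_negIf_self_neg_iff {x : ℤ} (hx : x ≠ 0) (b : Bool) :
    x * negIf b x < 0 ↔ b = true := by
  cases b <;> simp [hx, mul_self_nonneg]

theorem negIf_mul (b : Bool) (x y : ℤ) : negIf b x * y = negIf b (x * y) := by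
  cases b <;> simp

theorem Int.mul_neg_iff_of_sign_eq {a b : ℤ} (h : a.sign = b.sign) (x : ℤ) :
    a * x < 0 ↔ b * x < 0 := by
  rw [← Int.sign_eq_neg_one_iff_neg, ← Int.sign_eq_neg_one_iff_neg, Int.sign_mul, Int.sign_mul,
    h]

theorem Int.sign_add_sign (a : ℤ) : (a + a.sign).sign = a.sign := by
  rcases lt_trichotomy a 0 with h | rfl | h
  · rw [Int.sign_eq_neg_one_of_neg h, Int.sign_eq_neg_one_of_neg (by omega)]
  · rfl
  · rw [Int.sign_eq_one_of_pos h, Int.sign_eq_one_of_pos (by omega)]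

theorem Int.natAbs_add_sign {a : ℤ} (ha : a ≠ 0) : (a + a.sign).natAbs = a.natAbs + 1 := by
  rcases ha.lt_or_gt with h | h
  · rw [Int.sign_eq_neg_one_of_neg h]; omega
  · rw [Int.sign_eq_one_of_pos h]; omega

theorem Int.add_sign_injective : Function.Injective fun a : ℤ => a + a.sign := by
  intro a b h
  rcases lt_trichotomy a 0 with ha | rfl | ha <;> rcases lt_trichotomy b 0 with hb | rfl | hb <;>
    simp only [Int.sign_eq_one_of_pos, Int.sign_eq_neg_one_of_neg, Int.sign_zero, *] at h <;> omega

theorem Int.exists_add_sign_eq {a : ℤ} (ha : 2 ≤ a.natAbs) : ∃ b ≠ 0, b + b.sign = a := by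
  rcases lt_trichotomy a 0 with h | rfl | h
  · exact ⟨a + 1, by omega, by rw [Int.sign_eq_neg_one_of_neg (by omega)]; ring⟩
  · simp at ha
  · exact ⟨a - 1, by omega, by rw [Int.sign_eq_one_of_pos (by omega)]; ring⟩

@[simp] theorem signChanges_nil : signChanges [] = 0 := rfl

@[simp] theorem signChanges_singleton (a : ℤ) : signChanges [a] = 0 := rfl

-- `[].headI = 0`, so for `t = []` the added term vanishes.
theorem signChanges_cons (a : ℤ) (t : List ℤ) :
    signChanges (a :: t) = signChanges t + if a * t.headI < 0 then 1 else 0 := by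
  cases t with
  | nil => simp [signChanges]
  | cons b u =>
    by_cases h : a * b < 0 <;> simp [signChanges, h]

theorem signChanges_append_cons (l : List ℤ) (a : ℤ) (t : List ℤ) :
    signChanges (l ++ a :: t) = signChanges (l ++ [a]) + signChanges (a :: t) := by
  induction l with
  | nil => simp [signChanges_cons]
  | cons x l ih =>
    have hhead : (l ++ a :: t).headI = (l ++ [a]).headI := by cases l <;> rfl
    simp only [List.cons_append, signChanges_cons, ih, hhead]
    omega

theorem signChanges_reverse : ∀ l : List ℤ, signChanges l.reverse = signChanges l
  | [] | [_] => rfl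
  | a :: b :: u => by
    have hrev : (a :: b :: u).reverse = u.reverse ++ b :: [a] := by simp
    rw [hrev, signChanges_append_cons, ← List.reverse_cons, signChanges_reverse (b :: u),
      signChanges_cons a, signChanges_cons b [a]]
    simp only [signChanges_singleton, zero_add, List.headI_cons, mul_comm b a]
    rfl

theorem signChanges_map_negIf (b : Bool) :
    ∀ l : List ℤ, signChanges (l.map (negIf b)) = signChanges l
  | [] => rfl
  | a :: t => by
    have hhead : negIf b a * (t.map (negIf b)).headI = a * t.headI := by
      cases t <;> simp [negIf_mul_negIf]
    rw [List.map_cons, signChanges_cons, signChanges_cons, hhead, signChanges_map_negIf b t]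

@[simp] theorem absSum_nil : absSum [] = 0 := rfl

@[simp] theorem absSum_cons (a : ℤ) (t : List ℤ) : absSum (a :: t) = a.natAbs + absSum t := by
  simp [absSum]

@[simp] theorem absSum_append (l m : List ℤ) : absSum (l ++ m) = absSum l + absSum m := by
  simp [absSum]

@[simp] theorem absSum_reverse (l : List ℤ) : absSum l.reverse = absSum l := by
  simp [absSum, List.sum_reverse]

@[simp] theorem absSum_map_negIf (b : Bool) (l : List ℤ) :
    absSum (l.map (negIf b)) = absSum l := by
  cases b <;> simp [absSum, Function.comp_def]

def crossing (l : List ℤ) : ℤ := 2 * absSum l - signChanges l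

@[simp] theorem crossing_nil : crossing [] = 0 := rfl

theorem crossing_cons (a : ℤ) (t : List ℤ) :
    crossing (a :: t) = 2 * a.natAbs + crossing t - if a * t.headI < 0 then 1 else 0 := by
  simp only [crossing, absSum_cons, signChanges_cons]
  split <;> push_cast <;> ring

theorem length_lt_crossing {l : List ℤ} (hne : l ≠ []) (hnz : ∀ x ∈ l, x ≠ 0) :
    (l.length : ℤ) < crossing l := by
  induction l with
  | nil => exact absurd rfl hne
  | cons a t ih =>
    have ha : a ≠ 0 := hnz a List.mem_cons_self
    rw [crossing_cons, List.length_cons]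
    by_cases ht : t = []
    · subst ht
      have := abs_pos.2 ha
      simp [crossing]; omega
    · have := ih ht fun x hx => hnz x (by simp [hx])
      split <;> omega

def crossingSeqs (d : ℕ) : Set (List ℤ) :=
  {l | l ≠ [] ∧ (∀ x ∈ l, x ≠ 0) ∧ crossing l = d}

noncomputable def crossingCount (d : ℕ) : ℕ := (crossingSeqs d).ncard

theorem crossingSeqs_eq_empty_of_le_one {d : ℕ} (hd : d ≤ 1) : crossingSeqs d = ∅ := by
  refine Set.eq_empty_of_forall_notMem fun l ⟨hne, hnz, hl⟩ => ?_
  have := length_lt_crossing hne hnz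
  have : l.length ≠ 0 := by simpa using hne
  omega

theorem crossingSeqs_two : crossingSeqs 2 = {[1], [-1]} := by
  ext l
  constructor
  · rintro ⟨hne, hnz, hl⟩
    have hlen := length_lt_crossing hne hnz
    have : l.length ≠ 0 := by simpa using hne
    obtain ⟨a, rfl⟩ : ∃ a, l = [a] := List.length_eq_one_iff.1 (by push_cast at hl; omega)
    simp only [crossing, absSum_cons, absSum_nil, signChanges_singleton] at hl
    simp only [Set.mem_insert_iff, Set.mem_singleton_iff, List.cons.injEq, and_true]
    omega
  · rintro (rfl | rfl) <;> simp [crossingSeqs, crossing]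

def growHead : List ℤ → List ℤ
  | [] => []
  | a :: t => (a + a.sign) :: t

def consUnit (anti : Bool) (l : List ℤ) : List ℤ := negIf anti l.headI.sign :: l

theorem growHead_injective : Function.Injective growHead := by
  rintro (_ | ⟨a, t⟩) (_ | ⟨b, u⟩) h <;>
    simp only [growHead, reduceCtorEq, List.cons.injEq] at h
  · rfl
  · obtain ⟨hab, rfl⟩ := h
    rw [Int.add_sign_injective hab]

theorem consUnit_injective (anti : Bool) : Function.Injective (consUnit anti) :=
  fun _ _ h => (List.cons.inj h).2

theorem crossing_growHead {a : ℤ} (ha : a ≠ 0) (t : List ℤ) :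
    crossing (growHead (a :: t)) = crossing (a :: t) + 2 := by
  simp only [growHead, crossing_cons, Int.mul_neg_iff_of_sign_eq (Int.sign_add_sign a),
    Int.natAbs_add_sign ha]
  push_cast; ring

theorem crossing_consUnit (anti : Bool) {a : ℤ} (ha : a ≠ 0) (t : List ℤ) :
    crossing (consUnit anti (a :: t)) = crossing (a :: t) + 2 - anti.toNat := by
  have hunit : (negIf anti a.sign).natAbs = 1 := by
    cases anti <;> simp [Int.natAbs_sign_of_ne_zero ha]
  have hflip : negIf anti a.sign * a < 0 ↔ anti = true := by
    rw [negIf_mul, Int.sign_mul_self_eq_natAbs]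
    cases anti <;> simp [ha]
  simp only [consUnit, List.headI_cons, crossing_cons (negIf anti a.sign), hunit, hflip]
  cases anti <;> simp <;> ring

theorem growHead_mem_crossingSeqs {d : ℕ} {l : List ℤ} (hl : l ∈ crossingSeqs d) :
    growHead l ∈ crossingSeqs (d + 2) := by
  obtain ⟨hne, hnz, hcross⟩ := hl
  obtain ⟨a, t, rfl⟩ := List.exists_cons_of_ne_nil hne
  have ha : a ≠ 0 := hnz a List.mem_cons_self
  refine ⟨List.cons_ne_nil _ _, ?_, by rw [crossing_growHead ha, hcross]; push_cast; ring⟩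
  rintro x (_ | ⟨_, hx⟩)
  · rw [← Int.natAbs_ne_zero, Int.natAbs_add_sign ha]
    omega
  · exact hnz x (List.mem_cons_of_mem a hx)

theorem consUnit_mem_crossingSeqs (anti : Bool) {d : ℕ} {l : List ℤ}
    (hl : l ∈ crossingSeqs (d + anti.toNat)) : consUnit anti l ∈ crossingSeqs (d + 2) := by
  obtain ⟨hne, hnz, hcross⟩ := hl
  obtain ⟨a, t, rfl⟩ := List.exists_cons_of_ne_nil hne
  have ha : a ≠ 0 := hnz a List.mem_cons_self
  refine ⟨List.cons_ne_nil _ _, ?_, by rw [crossing_consUnit anti ha, hcross]; push_cast; ring⟩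
  rintro x (_ | ⟨_, hx⟩)
  · cases anti <;> simpa using ha
  · exact hnz x hx

theorem crossingSeqs_add_two_subset {d : ℕ} (hd : 1 ≤ d) :
    crossingSeqs (d + 2) ⊆
      growHead '' crossingSeqs d ∪ consUnit false '' crossingSeqs d ∪
        consUnit true '' crossingSeqs (d + 1) := by
  rintro l ⟨hne, hnz, hcross⟩
  obtain ⟨a, t, rfl⟩ := List.exists_cons_of_ne_nil hne
  have ha : a ≠ 0 := hnz a List.mem_cons_self
  have htnz : ∀ x ∈ t, x ≠ 0 := fun x hx => hnz x (List.mem_cons_of_mem a hx)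
  by_cases hbig : 2 ≤ a.natAbs
  · obtain ⟨b, hb, rfl⟩ := Int.exists_add_sign_eq hbig
    refine Or.inl (Or.inl ⟨b :: t, ⟨List.cons_ne_nil _ _, ?_, ?_⟩, rfl⟩)
    · rintro x (_ | ⟨_, hx⟩)
      exacts [hb, htnz x hx]
    · have := crossing_growHead hb t
      simp only [growHead] at this
      omega
  have ha1 : a = 1 ∨ a = -1 := by omega
  obtain ⟨b, u, rfl⟩ : ∃ b u, t = b :: u := by
    refine List.exists_cons_of_ne_nil fun ht => ?_
    subst ht
    rcases ha1 with rfl | rfl <;> simp [crossing_cons] at hcross <;> omega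
  have hb : b ≠ 0 := htnz b List.mem_cons_self
  have hcons : a :: b :: u = consUnit (decide (a * b < 0)) (b :: u) := by
    rcases ha1 with rfl | rfl <;> rcases hb.lt_or_gt with h | h <;>
      simp [consUnit, Int.sign_eq_neg_one_of_neg, Int.sign_eq_one_of_pos, h, h.not_gt]
  have hcross' := crossing_consUnit (decide (a * b < 0)) hb u
  rw [← hcons, hcross] at hcross'
  rw [hcons]
  cases h : decide (a * b < 0)
  · refine Or.inl (Or.inr ⟨b :: u, ⟨List.cons_ne_nil _ _, htnz, ?_⟩, rfl⟩)
    simp only [h, Bool.toNat_false] at hcross'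
    omega
  · refine Or.inr ⟨b :: u, ⟨List.cons_ne_nil _ _, htnz, ?_⟩, rfl⟩
    simp only [h, Bool.toNat_true] at hcross'
    omega

theorem crossingSeqs_add_two {d : ℕ} (hd : 1 ≤ d) :
    crossingSeqs (d + 2) =
      growHead '' crossingSeqs d ∪ consUnit false '' crossingSeqs d ∪
        consUnit true '' crossingSeqs (d + 1) := by
  refine (crossingSeqs_add_two_subset hd).antisymm ?_
  rintro _ ((⟨l, hl, rfl⟩ | ⟨l, hl, rfl⟩) | ⟨l, hl, rfl⟩)
  exacts [growHead_mem_crossingSeqs hl, consUnit_mem_crossingSeqs false hl,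
    consUnit_mem_crossingSeqs true hl]

theorem disjoint_growHead_consUnit (anti : Bool) (d e : ℕ) :
    Disjoint (growHead '' crossingSeqs d) (consUnit anti '' crossingSeqs e) := by
  rw [Set.disjoint_left]
  rintro _ ⟨l, ⟨hne, hnz, -⟩, rfl⟩ ⟨m, -, hm⟩
  obtain ⟨a, t, rfl⟩ := List.exists_cons_of_ne_nil hne
  have ha : a ≠ 0 := hnz a List.mem_cons_self
  have := congrArg (Int.natAbs ∘ List.headI) hm
  simp only [consUnit, growHead, Function.comp_apply, List.headI_cons, natAbs_negIf,
    Int.natAbs_sign, Int.natAbs_add_sign ha] at this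
  split at this <;> omega

theorem disjoint_consUnit_false_true (d e : ℕ) :
    Disjoint (consUnit false '' crossingSeqs d) (consUnit true '' crossingSeqs e) := by
  rw [Set.disjoint_left]
  rintro _ ⟨l, ⟨hne, hnz, -⟩, rfl⟩ ⟨m, -, hm⟩
  obtain ⟨hhead, rfl⟩ := List.cons.inj hm
  obtain ⟨a, t, rfl⟩ := List.exists_cons_of_ne_nil hne
  have ha : a.sign ≠ 0 := Int.sign_eq_zero_iff_zero.not.2 (hnz a List.mem_cons_self)
  simp only [negIf_true, negIf_false, id_eq, List.headI_cons] at hhead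
  omega

theorem crossingSeqs_finite (d : ℕ) : (crossingSeqs d).Finite := by
  induction d using Nat.strong_induction_on with
  | _ d ih =>
    match d with
    | 0 | 1 => simp [crossingSeqs_eq_empty_of_le_one]
    | 2 => simp [crossingSeqs_two]
    | d + 3 =>
      rw [crossingSeqs_add_two (by omega)]
      exact (((ih _ (by omega)).image _).union ((ih _ (by omega)).image _)).union
        ((ih _ (by omega)).image _)

theorem crossingCount_add_two {d : ℕ} (hd : 1 ≤ d) :
    crossingCount (d + 2) = crossingCount (d + 1) + 2 * crossingCount d := by
  have hfin := crossingSeqs_finite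
  rw [crossingCount, crossingSeqs_add_two hd,
    Set.ncard_union_eq (Set.disjoint_union_left.2 ⟨disjoint_growHead_consUnit _ _ _,
      disjoint_consUnit_false_true _ _⟩) (((hfin d).image _).union ((hfin d).image _))
      ((hfin _).image _),
    Set.ncard_union_eq (disjoint_growHead_consUnit _ _ _) ((hfin d).image _) ((hfin d).image _),
    Set.ncard_image_of_injective _ growHead_injective,
    Set.ncard_image_of_injective _ (consUnit_injective _),
    Set.ncard_image_of_injective _ (consUnit_injective _), crossingCount, crossingCount]
  ring

theorem crossingCount_succ (n : ℕ) :
    3 * (crossingCount (n + 1) : ℤ) = 2 * (2 ^ n - (-1) ^ n) := by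
  induction n using Nat.twoStepInduction with
  | zero => simp [crossingCount, crossingSeqs_eq_empty_of_le_one]
  | one => simp [crossingCount, crossingSeqs_two]
  | more n ih₀ ih₁ =>
    rw [crossingCount_add_two (by omega)]
    push_cast
    linear_combination ih₁ + 2 * ih₀

theorem List.take_half_append_reverse_map {α : Type*} {f : α → α} {l : List α}
    (hl : l.reverse = l.map f) (he : Even l.length) :
    l.take (l.length / 2) ++ (l.take (l.length / 2)).reverse.map f = l := by
  set m := l.length / 2
  have hsplit := List.take_append_drop m l
  have hrev :
      (l.drop m).reverse ++ (l.take m).reverse = (l.take m).map f ++ (l.drop m).map f := by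
    rw [← List.reverse_append, ← List.map_append, hsplit, hl]
  have hlen : (l.drop m).reverse.length = ((l.take m).map f).length := by
    obtain ⟨k, hk⟩ := he
    simp [m, hk]
    omega
  have hdrop := (List.append_inj hrev hlen).1
  rw [List.map_reverse, ← hdrop, List.reverse_reverse, hsplit]

def mirror (anti : Bool) (h : List ℤ) : List ℤ := h ++ h.reverse.map (negIf anti)

theorem length_mirror (anti : Bool) (h : List ℤ) : (mirror anti h).length = 2 * h.length := by
  simp [mirror, two_mul]

theorem mirror_injective (anti : Bool) : Function.Injective (mirror anti) := fun h₁ h₂ heq =>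
  (List.append_inj heq (by simpa [length_mirror] using congrArg List.length heq)).1

theorem reverse_mirror (anti : Bool) (h : List ℤ) :
    (mirror anti h).reverse = (mirror anti h).map (negIf anti) := by
  simp [mirror, List.map_reverse, Function.comp_def, negIf_negIf]

theorem isPalOrAnti_iff (l : List ℤ) :
    IsPalOrAnti l ↔ ∃ anti, l.reverse = l.map (negIf anti) := by
  constructor
  · rintro (h | h)
    exacts [⟨false, by simpa using h⟩, ⟨true, by simpa using h⟩]
  · rintro ⟨_ | _, h⟩
    exacts [Or.inl (by simpa using h), Or.inr (by simpa using h)]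

theorem crossing_mirror (anti : Bool) {h : List ℤ} (hne : h ≠ []) (hnz : ∀ x ∈ h, x ≠ 0) :
    crossing (mirror anti h) = 2 * crossing h - anti.toNat := by
  obtain ⟨h', a, rfl⟩ : ∃ h' a, h = h' ++ [a] :=
    ⟨h.dropLast, h.getLast hne, (List.dropLast_append_getLast hne).symm⟩
  have ha : a ≠ 0 := hnz a (by simp)
  have hsplit :
      mirror anti (h' ++ [a]) = h' ++ a :: negIf anti a :: h'.reverse.map (negIf anti) := by
    simp [mirror]
  have hsc : signChanges (mirror anti (h' ++ [a])) =
      2 * signChanges (h' ++ [a]) + anti.toNat := by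
    rw [hsplit, signChanges_append_cons, signChanges_cons a, ← signChanges_reverse (h' ++ [a]),
      ← signChanges_map_negIf anti (h' ++ [a]).reverse]
    simp only [List.headI_cons, mul_negIf_self_neg_iff ha]
    cases anti <;> simp [List.reverse_append] <;> ring
  rw [crossing, crossing, hsc]
  simp only [mirror, absSum_append, absSum_map_negIf, absSum_reverse]
  push_cast; ring

theorem ecross_inter_isPalOrAnti (c : ℕ) :
    Ecross c ∩ {l | IsPalOrAnti l} = mirror (c % 2 == 1) '' crossingSeqs ((c + 1) / 2) := by
  ext l
  constructor
  · rintro ⟨⟨⟨hne, heven, hnz⟩, hc⟩, hpal⟩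
    obtain ⟨anti, hanti⟩ := (isPalOrAnti_iff l).1 hpal
    set h := l.take (l.length / 2)
    have hl : mirror anti h = l := List.take_half_append_reverse_map hanti heven
    have hhne : h ≠ [] := by
      have : l.length ≠ 0 := by simpa using hne
      obtain ⟨k, hk⟩ := heven
      simp [h, hne]
      omega
    have hhnz : ∀ x ∈ h, x ≠ 0 := fun x hx => hnz x (List.mem_of_mem_take hx)
    have hcross := crossing_mirror anti hhne hhnz
    rw [hl, show crossing l = c from hc] at hcross
    have hparity : anti = (c % 2 == 1) ∧ crossing h = ((c + 1) / 2 : ℕ) := by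
      cases anti <;> simp at hcross ⊢ <;> omega
    rw [← hl, hparity.1]
    exact ⟨h, ⟨hhne, hhnz, hparity.2⟩, rfl⟩
  · rintro ⟨h, ⟨hne, hnz, hc⟩, rfl⟩
    refine ⟨⟨⟨by simp [mirror, hne], by simp [length_mirror], ?_⟩, ?_⟩,
      (isPalOrAnti_iff _).2 ⟨_, reverse_mirror _ _⟩⟩
    · simp only [mirror, List.mem_append, List.mem_map, List.mem_reverse]
      rintro x (hx | ⟨y, hy, rfl⟩)
      exacts [hnz x hx, by cases c % 2 == 1 <;> simpa using hnz y hy]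
    · change crossing (mirror _ h) = c
      rw [crossing_mirror _ hne hnz, hc]
      rcases Nat.mod_two_eq_zero_or_one c with hc2 | hc2 <;> simp [hc2] <;> omega

theorem epTot_eq_crossingCount (c : ℕ) : epTot c = crossingCount ((c + 1) / 2) := by
  rw [epTot, ecross_inter_isPalOrAnti, Set.ncard_image_of_injective _ (mirror_injective _),
    crossingCount]

theorem epTot_closed_formula_general (c : ℕ) :
    (3 : ℤ) * epTot c = 2 * (2 ^ ((c - 1) / 2) - (-1 : ℤ) ^ ((c - 1) / 2)) := by
  rw [epTot_eq_crossingCount]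
  rcases c with _ | c
  · simp [crossingCount, crossingSeqs_eq_empty_of_le_one]
  · rw [show (c + 1 + 1) / 2 = c / 2 + 1 by omega, crossingCount_succ]
    simp

theorem epTot_closed_formula (c : ℕ) (hc : 3 ≤ c) :
    (3 : ℤ) * epTot c = 2 * (2 ^ ((c - 1) / 2) - (-1 : ℤ) ^ ((c - 1) / 2)) :=
  epTot_closed_formula_general c
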